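/- Let φ_L, φ, φ_R : [−1,1] → ℝ be polynomials of degree at most p, let m be a positive multiple of p, and suppose φ_L(t) ≤ φ(t) ≤ φ_R(t) at all m+1 Chebyshev–Gauss–Lobatto points t_k = −cos(kπ/m), k = 0,…,m, and sup_{t∈[−1,1]}(φ_R(t) − φ_L(t)) ≤ C. Then for all t ∈ [−1,1]: φ(t) ≥ φ_L(t) − (π²C/8)·√p·(p/m)² and φ(t) ≤ φ_R(t) + (π²C/8)·√p·(p/m)². -/

import Mathlib

/-!
For `q = φ - φL` (and likewise `φR - φ`), `g ξ = q (-cos ξ) - C / 2` is a cosine polynomial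
`∑_{j ≤ p} β j cos (j ξ)` whose values at the nodes `ξ = k π / m` lie in `[-C/2, C/2]`.
Discrete orthogonality of the `cos (j ξ)` on the `2m` equispaced nodes of a period (`p ≤ m`)
gives `∑ β j ^ 2 ≤ C ^ 2 / 2`, so by Cauchy–Schwarz `|g''| ≤ ∑ j ^ 2 |β j| ≤ p ^ (5/2) C`.
Between two neighbouring nodes, `π / m` apart, a function with `g'' ≤ B` that is `≥ -C/2` at
both ends dips at most `B (π / m) ^ 2 / 8` below `-C/2`: the worst case is a parabola.
-/

open Polynomial Real Finset

noncomputable def cosPoly (β : ℕ → ℝ) (n : ℕ) (θ : ℝ) : ℝ :=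
  ∑ j ∈ range (n + 1), β j * cos (j * θ)

noncomputable def sinPoly (β : ℕ → ℝ) (n : ℕ) (θ : ℝ) : ℝ :=
  ∑ j ∈ range (n + 1), β j * sin (j * θ)

/-- Subtracting a multiple of `T (n + 1)` lowers the degree, and `T k (cos θ) = cos (k θ)`. -/
theorem exists_eval_cos_eq_cosPoly (n : ℕ) (q : ℝ[X]) (hq : q.natDegree ≤ n) :
    ∃ β : ℕ → ℝ, ∀ θ, q.eval (cos θ) = cosPoly β n θ := by
  induction n generalizing q with
  | zero =>
    refine ⟨fun _ => q.coeff 0, fun θ => ?_⟩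
    rw [eq_C_of_natDegree_le_zero hq]
    simp [cosPoly]
  | succ n ih =>
    set T := Chebyshev.T ℝ ((n + 1 : ℕ) : ℤ)
    set c := q.coeff (n + 1) / 2 ^ n
    have hT : T.natDegree = n + 1 := by rw [Chebyshev.natDegree_T, Int.natAbs_natCast]
    have hTlead : T.coeff (n + 1) = 2 ^ n := by
      rw [← hT, coeff_natDegree, Chebyshev.leadingCoeff_T, Int.natAbs_natCast, Nat.add_sub_cancel]
    have hdeg : (q - C c * T).natDegree ≤ n := by
      rw [natDegree_le_iff_coeff_eq_zero]
      intro N hN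
      rcases (Nat.succ_le_of_lt hN).eq_or_lt with rfl | hlt
      · simp [hTlead, c]
      · rw [coeff_sub, coeff_C_mul, coeff_eq_zero_of_natDegree_lt (hq.trans_lt hlt),
          coeff_eq_zero_of_natDegree_lt (hT.trans_lt hlt)]
        ring
    obtain ⟨β, hβ⟩ := ih _ hdeg
    refine ⟨Function.update β (n + 1) c, fun θ => ?_⟩
    have hsplit : q.eval (cos θ) = (q - C c * T).eval (cos θ) + c * cos ((n + 1 : ℕ) * θ) := by
      simp [T, Chebyshev.T_real_cos]
    rw [hsplit, hβ, cosPoly, cosPoly, sum_range_succ _ (n + 1), Function.update_self]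
    congr 1
    exact sum_congr rfl fun j hj => by rw [Function.update_of_ne (mem_range.1 hj).ne]

theorem sum_range_cos_int_mul_eq_zero {m : ℕ} {n : ℤ} (h : ¬ (2 * m : ℤ) ∣ n) :
    ∑ k ∈ range (2 * m), cos (n * k * π / m) = 0 := by
  rcases m.eq_zero_or_pos with rfl | hm
  · simp
  have hm' : (m : ℝ) ≠ 0 := by positivity
  set z := Complex.exp ((n * π / m : ℝ) * Complex.I)
  have hpow : ∀ k : ℕ, z ^ k = Complex.exp ((n * k * π / m : ℝ) * Complex.I) := fun k => by
    rw [← Complex.exp_nat_mul]; push_cast; ring_nf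
  have hz : z ≠ 1 := by
    rw [Ne, Complex.exp_eq_one_iff]
    rintro ⟨l, hl⟩
    have hreal : n * π / m = l * (2 * π) := Complex.ofReal_injective <|
      mul_right_cancel₀ Complex.I_ne_zero (by push_cast at hl ⊢; rw [hl]; ring)
    have hl' : (n : ℝ) = 2 * m * l := by
      field_simp at hreal
      linarith
    exact h ⟨l, by exact_mod_cast hl'⟩
  have hz2m : z ^ (2 * m) = 1 := by
    rw [hpow, Complex.exp_eq_one_iff]
    exact ⟨n, by push_cast; field_simp; exact mul_div_cancel_right₀ _ (by exact_mod_cast hm')⟩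
  have hsum : ∑ k ∈ range (2 * m), z ^ k = 0 := by
    rw [geom_sum_eq hz, hz2m, sub_self, zero_div]
  have := congrArg Complex.re hsum
  rw [Complex.re_sum] at this
  simpa only [hpow, Complex.exp_ofReal_mul_I_re, Complex.zero_re] using this

theorem sum_range_cos_int_mul_nonneg (m : ℕ) (n : ℤ) :
    0 ≤ ∑ k ∈ range (2 * m), cos (n * k * π / m) := by
  by_cases h : (2 * m : ℤ) ∣ n
  · obtain ⟨l, rfl⟩ := h
    refine sum_nonneg fun k _ => ?_
    rcases eq_or_ne (m : ℝ) 0 with hm | hm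
    · simp [hm]
    · have : ((2 * m * l : ℤ) : ℝ) * k * π / m = ((l * k : ℤ) : ℝ) * (2 * π) := by
        push_cast; field_simp
      rw [this, cos_int_mul_two_pi]
      exact zero_le_one
  · exact (sum_range_cos_int_mul_eq_zero h).ge

theorem sum_range_cos_mul_cos_eq_zero {m j l : ℕ} (hj : j ≤ m) (hl : l ≤ m) (hjl : j ≠ l) :
    ∑ k ∈ range (2 * m), cos (j * (k * π / m)) * cos (l * (k * π / m)) = 0 := by
  have hprod : ∀ k : ℕ, cos (j * (k * π / m)) * cos (l * (k * π / m)) =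
      (cos (((j + l : ℤ) : ℝ) * k * π / m) + cos (((j - l : ℤ) : ℝ) * k * π / m)) / 2 := by
    intro k
    push_cast
    rw [show (j + l : ℝ) * k * π / m = j * (k * π / m) + l * (k * π / m) by ring,
      show (j - l : ℝ) * k * π / m = j * (k * π / m) - l * (k * π / m) by ring,
      cos_add, cos_sub]
    ring
  have hndvd : ∀ n : ℤ, n ≠ 0 → |n| < 2 * m → ¬ (2 * m : ℤ) ∣ n :=
    fun n hn hlt hdvd => hn (Int.eq_zero_of_abs_lt_dvd hdvd hlt)
  simp_rw [hprod, ← sum_div, sum_add_distrib]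
  rw [sum_range_cos_int_mul_eq_zero (hndvd _ (by omega) (by rw [abs_lt]; omega)),
    sum_range_cos_int_mul_eq_zero (hndvd _ (by omega) (by rw [abs_lt]; omega))]
  simp

theorem le_sum_range_cos_sq (m j : ℕ) :
    (m : ℝ) ≤ ∑ k ∈ range (2 * m), cos (j * (k * π / m)) ^ 2 := by
  have hsq : ∀ k : ℕ,
      cos (j * (k * π / m)) ^ 2 = 1 / 2 + cos (((2 * j : ℤ) : ℝ) * k * π / m) / 2 := by
    intro k
    rw [cos_sq]; push_cast; ring_nf
  simp_rw [hsq, sum_add_distrib, ← sum_div]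
  have := sum_range_cos_int_mul_nonneg m (2 * j)
  rw [sum_const, card_range, nsmul_eq_mul]
  push_cast at this ⊢
  linarith

theorem mul_sum_sq_le_sum_sq_cosPoly {m p : ℕ} (hpm : p ≤ m) (β : ℕ → ℝ) :
    m * ∑ j ∈ range (p + 1), β j ^ 2 ≤ ∑ k ∈ range (2 * m), cosPoly β p (k * π / m) ^ 2 := by
  set S : ℕ → ℕ → ℝ := fun j l =>
    ∑ k ∈ range (2 * m), cos (j * (k * π / m)) * cos (l * (k * π / m))
  calc m * ∑ j ∈ range (p + 1), β j ^ 2 = ∑ j ∈ range (p + 1), β j ^ 2 * m := by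
        rw [mul_sum]; simp_rw [mul_comm]
    _ ≤ ∑ j ∈ range (p + 1), β j ^ 2 * S j j := by
        gcongr with j
        simpa only [S, ← sq] using le_sum_range_cos_sq m j
    _ = ∑ j ∈ range (p + 1), ∑ l ∈ range (p + 1), β j * β l * S j l := by
        refine sum_congr rfl fun j hj => ?_
        rw [sum_eq_single j (fun l hl hlj => ?_) (fun h => absurd hj h), sq]
        rw [mem_range] at hj hl
        simp only [S]
        rw [sum_range_cos_mul_cos_eq_zero (by omega) (by omega) hlj.symm, mul_zero]
    _ = ∑ k ∈ range (2 * m), cosPoly β p (k * π / m) ^ 2 := by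
        simp only [S, mul_sum]
        rw [sum_congr rfl fun j _ => sum_comm, sum_comm]
        simp only [cosPoly, sq, sum_mul_sum]
        exact sum_congr rfl fun k _ => sum_congr rfl fun j _ =>
          sum_congr rfl fun l _ => by ring

theorem sum_sq_le_of_abs_cosPoly_nodes_le {m p : ℕ} (hm : 0 < m) (hpm : p ≤ m) {β : ℕ → ℝ}
    {D : ℝ} (hβ : ∀ k < 2 * m, |cosPoly β p (k * π / m)| ≤ D) :
    ∑ j ∈ range (p + 1), β j ^ 2 ≤ 2 * D ^ 2 := by
  have hm' : (0 : ℝ) < m := by exact_mod_cast hm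
  refine le_of_mul_le_mul_left ?_ hm'
  calc m * ∑ j ∈ range (p + 1), β j ^ 2
      ≤ ∑ k ∈ range (2 * m), cosPoly β p (k * π / m) ^ 2 :=
        mul_sum_sq_le_sum_sq_cosPoly hpm β
    _ ≤ ∑ k ∈ range (2 * m), D ^ 2 := sum_le_sum fun k hk => by
        obtain ⟨hlow, hup⟩ := abs_le.1 (hβ k (mem_range.1 hk))
        exact sq_le_sq' hlow hup
    _ = m * (2 * D ^ 2) := by
        rw [sum_const, card_range, nsmul_eq_mul]; push_cast; ring

theorem hasDerivAt_cosPoly (β : ℕ → ℝ) (n : ℕ) (θ : ℝ) :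
    HasDerivAt (cosPoly β n) (-sinPoly (fun j => j * β j) n θ) θ := by
  unfold cosPoly sinPoly
  rw [← sum_neg_distrib]
  refine HasDerivAt.fun_sum fun j _ => ?_
  exact ((hasDerivAt_const_mul (j : ℝ)).cos.const_mul (β j)).congr_deriv (by ring)

theorem hasDerivAt_sinPoly (β : ℕ → ℝ) (n : ℕ) (θ : ℝ) :
    HasDerivAt (sinPoly β n) (cosPoly (fun j => j * β j) n θ) θ := by
  unfold cosPoly sinPoly
  refine HasDerivAt.fun_sum fun j _ => ?_
  exact ((hasDerivAt_const_mul (j : ℝ)).sin.const_mul (β j)).congr_deriv (by ring)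

theorem abs_cosPoly_le (β : ℕ → ℝ) (n : ℕ) (θ : ℝ) :
    |cosPoly β n θ| ≤ ∑ j ∈ range (n + 1), |β j| :=
  (abs_sum_le_sum_abs _ _).trans <| sum_le_sum fun j _ => by
    rw [abs_mul]; exact mul_le_of_le_one_right (abs_nonneg _) (abs_cos_le_one _)

/-- Cauchy–Schwarz against `∑ j ^ 4 ≤ (p + 1) p ^ 4 ≤ 2 p ^ 5`. -/
theorem abs_cosPoly_mul_mul_le {p : ℕ} (hp : 0 < p) {β : ℕ → ℝ} {D : ℝ} (hD : 0 ≤ D)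
    (hβ : ∑ j ∈ range (p + 1), β j ^ 2 ≤ 2 * D ^ 2) (θ : ℝ) :
    |cosPoly (fun j => j * (j * β j)) p θ| ≤ 2 * p ^ 2 * √p * D := by
  have hp' : (1 : ℝ) ≤ p := by exact_mod_cast hp
  have hpow : ∑ j ∈ range (p + 1), ((j : ℝ) ^ 2) ^ 2 ≤ (p + 1) * p ^ 4 := by
    calc ∑ j ∈ range (p + 1), ((j : ℝ) ^ 2) ^ 2 ≤ ∑ j ∈ range (p + 1), (p : ℝ) ^ 4 := by
          gcongr with j hj
          rw [← pow_mul]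
          have hjp : (j : ℝ) ≤ p := by exact_mod_cast Nat.lt_succ_iff.1 (mem_range.1 hj)
          exact pow_le_pow_left₀ (Nat.cast_nonneg j) hjp 4
      _ = (p + 1) * p ^ 4 := by rw [sum_const, card_range, nsmul_eq_mul]; push_cast; ring
  have hCS : (∑ j ∈ range (p + 1), (j : ℝ) ^ 2 * |β j|) ^ 2 ≤ (2 * p ^ 2 * √p * D) ^ 2 := by
    calc (∑ j ∈ range (p + 1), (j : ℝ) ^ 2 * |β j|) ^ 2
        ≤ (∑ j ∈ range (p + 1), ((j : ℝ) ^ 2) ^ 2) * ∑ j ∈ range (p + 1), |β j| ^ 2 :=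
          sum_mul_sq_le_sq_mul_sq _ _ _
      _ ≤ ((p + 1) * p ^ 4) * (2 * D ^ 2) := by
          simp only [sq_abs]
          gcongr
      _ ≤ (2 * p ^ 2 * √p * D) ^ 2 := by
          rw [mul_pow, mul_pow, mul_pow, sq_sqrt (by positivity)]
          have : (0 : ℝ) ≤ p ^ 4 * D ^ 2 := by positivity
          nlinarith
  calc |cosPoly (fun j => j * (j * β j)) p θ| ≤ ∑ j ∈ range (p + 1), |(j : ℝ) * (j * β j)| :=
        abs_cosPoly_le _ _ _
    _ = ∑ j ∈ range (p + 1), (j : ℝ) ^ 2 * |β j| := by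
        simp only [abs_mul, Nat.abs_cast, sq, mul_assoc]
    _ ≤ 2 * p ^ 2 * √p * D := le_of_pow_le_pow_left₀ two_ne_zero (by positivity) hCS

/-- `g + B (x - a) (b - x) / 2` is concave, so it stays above its values at `a` and `b`. -/
theorem sub_mul_sq_div_eight_le_of_hasDerivAt2 {g g' g'' : ℝ → ℝ} {B c a b x : ℝ}
    (hg : ∀ y, HasDerivAt g (g' y) y) (hg' : ∀ y, HasDerivAt g' (g'' y) y)
    (hB0 : 0 ≤ B) (hB : ∀ y, g'' y ≤ B) (ha : c ≤ g a) (hb : c ≤ g b) (hx : x ∈ Set.Icc a b) :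
    c - B * (b - a) ^ 2 / 8 ≤ g x := by
  set u : ℝ → ℝ := fun y => g y + B / 2 * ((y - a) * (b - y))
  have hu : ∀ y, HasDerivAt u (g' y + B / 2 * (a + b - 2 * y)) y := fun y =>
    (hg y).add ((((hasDerivAt_id' y).sub_const a).mul
      ((hasDerivAt_id' y).const_sub b)).const_mul (B / 2) |>.congr_deriv (by ring))
  have hu' : ∀ y, HasDerivAt (fun y => g' y + B / 2 * (a + b - 2 * y)) (g'' y - B) y := fun y =>
    (hg' y).add ((((hasDerivAt_id' y).const_mul 2).const_sub (a + b)).const_mul (B / 2))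
      |>.congr_deriv (by ring)
  have hconc : ConcaveOn ℝ Set.univ u :=
    concaveOn_of_hasDerivWithinAt2_nonpos convex_univ
      (fun y _ => (hu y).continuousAt.continuousWithinAt)
      (fun y _ => (hu y).hasDerivWithinAt) (fun y _ => (hu' y).hasDerivWithinAt)
      (fun y _ => by linarith [hB y])
  have hux : min (u a) (u b) ≤ u x :=
    hconc.min_le_of_mem_Icc (Set.mem_univ a) (Set.mem_univ b) hx
  have hua : u a = g a := by simp [u]
  have hub : u b = g b := by simp [u]
  have hcu : c ≤ u x := le_trans (le_min ha hb) (hua ▸ hub ▸ hux)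
  have hquad : (x - a) * (b - x) ≤ (b - a) ^ 2 / 4 := by nlinarith [sq_nonneg (a + b - 2 * x)]
  have hpar : B / 2 * ((x - a) * (b - x)) ≤ B / 2 * ((b - a) ^ 2 / 4) := by gcongr
  have hgx : g x = u x - B / 2 * ((x - a) * (b - x)) := by simp only [u]; ring
  linarith

theorem exists_lt_mem_Icc_mul {h ξ : ℝ} {N : ℕ} (hh : 0 < h) (hN : 0 < N)
    (hξ : ξ ∈ Set.Icc 0 (N * h)) : ∃ k < N, ξ ∈ Set.Icc (k * h) ((k + 1) * h) := by
  rcases hξ.2.eq_or_lt with heq | hlt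
  · refine ⟨N - 1, by omega, ?_, ?_⟩ <;> rw [heq, Nat.cast_pred hN]
    · nlinarith
    · linarith
  · have hξh : 0 ≤ ξ / h := div_nonneg hξ.1 hh.le
    refine ⟨⌊ξ / h⌋₊, (Nat.floor_lt hξh).2 ((div_lt_iff₀ hh).2 hlt), ?_, ?_⟩
    · exact (le_div_iff₀ hh).1 (Nat.floor_le hξh)
    · exact ((div_le_iff₀ hh).1 (Nat.lt_floor_add_one _).le)

theorem neg_sub_le_cosPoly_of_nodes {m p : ℕ} (hp : 0 < p) (hpm : p ≤ m) {β : ℕ → ℝ}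
    {D : ℝ} (hβ : ∀ k < 2 * m, |cosPoly β p (k * π / m)| ≤ D) {θ : ℝ} (hθ : θ ∈ Set.Icc 0 π) :
    -D - p ^ 2 * √p * D * (π / m) ^ 2 / 4 ≤ cosPoly β p θ := by
  have hm : 0 < m := hp.trans_le hpm
  have hm' : (0 : ℝ) < m := by exact_mod_cast hm
  have hD : 0 ≤ D := (abs_nonneg _).trans (hβ 0 (by omega))
  have hcurv := abs_cosPoly_mul_mul_le hp hD (sum_sq_le_of_abs_cosPoly_nodes_le hm hpm hβ)
  have hnode : ∀ i ≤ m, -D ≤ cosPoly β p (i * (π / m)) := fun i hi =>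
    (abs_le.1 (mul_div_assoc (i : ℝ) π m ▸ hβ i (by omega))).1
  obtain ⟨k, hk, hθk⟩ := exists_lt_mem_Icc_mul (div_pos pi_pos hm') hm
    (by rwa [mul_div_cancel₀ _ hm'.ne'] : θ ∈ Set.Icc 0 (m * (π / m)))
  have hsag := sub_mul_sq_div_eight_le_of_hasDerivAt2 (hasDerivAt_cosPoly β p)
    (fun y => (hasDerivAt_sinPoly _ p y).neg) (by positivity)
    (fun y => (neg_le_abs _).trans (hcurv y)) (hnode k hk.le)
    (by exact_mod_cast hnode (k + 1) hk) hθk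
  rw [show ((k : ℝ) + 1) * (π / m) - k * (π / m) = π / m by ring] at hsag
  linarith

theorem exists_le_cos_nat_mul_pi_div_eq {m k : ℕ} (hk : k ≤ 2 * m) :
    ∃ i ≤ m, cos (i * π / m) = cos (k * π / m) := by
  rcases le_or_gt k m with hkm | hkm
  · exact ⟨k, hkm, rfl⟩
  · refine ⟨2 * m - k, by omega, ?_⟩
    have hm : (m : ℝ) ≠ 0 := by norm_cast; omega
    rw [Nat.cast_sub hk, ← cos_two_pi_sub]
    congr 1
    push_cast
    field_simp
    ring

theorem neg_le_eval_of_cgl_nodes {p m : ℕ} (hp : 0 < p) (hpm : p ≤ m) {q : ℝ[X]}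
    (hq : q.natDegree ≤ p) {C : ℝ}
    (hs : ∀ k ≤ m, 0 ≤ q.eval (-cos (k * π / m)) ∧ q.eval (-cos (k * π / m)) ≤ C)
    {t : ℝ} (ht : t ∈ Set.Icc (-1) 1) :
    -(π ^ 2 * C / 8 * √p * ((p : ℝ) / m) ^ 2) ≤ q.eval t := by
  have hr : ((q - Polynomial.C (C / 2)).comp (-X)).natDegree ≤ p := by
    rw [natDegree_comp, natDegree_neg, natDegree_X, mul_one, natDegree_sub_C]
    exact hq
  obtain ⟨β, hβ⟩ := exists_eval_cos_eq_cosPoly p _ hr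
  have hβ' : ∀ θ, cosPoly β p θ = q.eval (-cos θ) - C / 2 := fun θ => by rw [← hβ]; simp
  have hnodes : ∀ k < 2 * m, |cosPoly β p (k * π / m)| ≤ C / 2 := by
    intro k hk
    obtain ⟨i, hi, hcos⟩ := exists_le_cos_nat_mul_pi_div_eq hk.le
    rw [hβ', ← hcos, abs_le]
    constructor <;> linarith [hs i hi]
  have hθ : arccos (-t) ∈ Set.Icc 0 π := ⟨arccos_nonneg _, arccos_le_pi _⟩
  have hbound := neg_sub_le_cosPoly_of_nodes hp hpm hnodes hθ
  rw [hβ', cos_arccos (by linarith [ht.2]) (by linarith [ht.1]), neg_neg] at hbound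
  have hm : (m : ℝ) ≠ 0 := by have := hp.trans_le hpm; positivity
  have hconst :
      π ^ 2 * C / 8 * √p * ((p : ℝ) / m) ^ 2 = p ^ 2 * √p * (C / 2) * (π / m) ^ 2 / 4 := by
    field_simp; ring
  linarith

open Real in
theorem cgl_sampling_bound (p m : ℕ) (hp : 0 < p)
    (hm : ∃ k : ℕ, 0 < k ∧ m = k * p)
    (φL φ φR : Polynomial ℝ)
    (hdL : φL.natDegree ≤ p) (hd : φ.natDegree ≤ p) (hdR : φR.natDegree ≤ p)
    (C : ℝ)
    (hsample : ∀ k : ℕ, k ≤ m →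
      φL.eval (-Real.cos ((k : ℝ) * π / m)) ≤ φ.eval (-Real.cos ((k : ℝ) * π / m)) ∧
      φ.eval (-Real.cos ((k : ℝ) * π / m)) ≤ φR.eval (-Real.cos ((k : ℝ) * π / m)))
    (hbox : ∀ t ∈ Set.Icc (-1 : ℝ) 1, φR.eval t - φL.eval t ≤ C) :
    ∀ t ∈ Set.Icc (-1 : ℝ) 1,
      φL.eval t - π ^ 2 * C / 8 * Real.sqrt p * ((p : ℝ) / m) ^ 2 ≤ φ.eval t ∧
      φ.eval t ≤ φR.eval t + π ^ 2 * C / 8 * Real.sqrt p * ((p : ℝ) / m) ^ 2 := by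
  obtain ⟨k, hk, hmk⟩ := hm
  have hpm : p ≤ m := hmk ▸ Nat.le_mul_of_pos_left p hk
  have hwidth : ∀ i : ℕ, φR.eval (-cos (i * π / m)) - φL.eval (-cos (i * π / m)) ≤ C :=
    fun i => hbox _ ⟨neg_le_neg (cos_le_one _), by linarith [neg_one_le_cos (i * π / m)]⟩
  intro t ht
  have hlow := neg_le_eval_of_cgl_nodes hp hpm
    ((natDegree_sub_le_of_le hd hdL).trans (max_self p).le) (C := C) (fun i hi => by
      obtain ⟨hL, hR⟩ := hsample i hi
      simp only [eval_sub]; constructor <;> linarith [hwidth i]) ht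
  have hup := neg_le_eval_of_cgl_nodes hp hpm
    ((natDegree_sub_le_of_le hdR hd).trans (max_self p).le) (C := C) (fun i hi => by
      obtain ⟨hL, hR⟩ := hsample i hi
      simp only [eval_sub]; constructor <;> linarith [hwidth i]) ht
  simp only [eval_sub] at hlow hup
  constructor <;> linarith
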